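/- arXiv:2002.05383 — 12 statements merged into one kernel-verified Lean document; each statement's English description precedes it below -/
import Mathlib

section
/- If G is a graph in which every vertex v has a list L(v) of allowed colors with |L(v)| > deg(v), and α is any proper coloring of G, then there exists a sequence of recolorings from α to a proper L-coloring of G in which every vertex is recolored at most once (i.e., there is an ordering v_1, ..., v_n of V(G) and colors c_i ∈ L(v_i) such that recoloring v_1 to c_1, then v_2 to c_2, etc., keeps the coloring proper at every step and ends with every v_i colored c_i). -/
open Finset

/-- A once-only recoloring of `G` from `α` to a proper `L`-coloring: there is an
ordering of the vertices (given by injective `ord`) and target colors `γ v ∈ L v`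
such that recoloring the vertices one by one in this order keeps the coloring
proper at every step, each vertex being recolored at most once. -/
def OnceOnly {V : Type} [Fintype V] (G : SimpleGraph V) (α : V → ℕ)
    (L : V → Finset ℕ) : Prop :=
  ∃ (γ : V → ℕ) (ord : V → ℕ), Function.Injective ord ∧ (∀ v, γ v ∈ L v) ∧
    ∀ (i : ℕ) (u v : V), G.Adj u v →
      (if ord u < i then γ u else α u) ≠ (if ord v < i then γ v else α v)

noncomputable def pick (s : Finset ℕ) : ℕ := if h : s.Nonempty then s.min' h else 0

lemma pick_mem {s : Finset ℕ} (h : s.Nonempty) : pick s ∈ s := by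
  rw [pick, dif_pos h]; exact s.min'_mem h

noncomputable def gam {V : Type} [Fintype V] [DecidableEq V] (G : SimpleGraph V)
    [DecidableRel G.Adj] (L : V → Finset ℕ) (α : V → ℕ) (i : ℕ) : ℕ :=
  if h : i < Fintype.card V then
    pick ((L ((Fintype.equivFin V).symm ⟨i, h⟩)) \
      ((G.neighborFinset ((Fintype.equivFin V).symm ⟨i, h⟩)).image
        (fun u => if h' : ((Fintype.equivFin V) u : ℕ) < i then gam G L α ((Fintype.equivFin V) u) else α u)))
  else 0
termination_by i
decreasing_by exact h'

lemma gam_spec {V : Type} [Fintype V] [DecidableEq V] (G : SimpleGraph V)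
    [DecidableRel G.Adj] (L : V → Finset ℕ) (α : V → ℕ)
    (hL : ∀ v, G.degree v < (L v).card) (i : ℕ) (h : i < Fintype.card V) :
    gam G L α i ∈ L ((Fintype.equivFin V).symm ⟨i, h⟩) ∧
    ∀ u, G.Adj ((Fintype.equivFin V).symm ⟨i, h⟩) u →
      gam G L α i ≠ (if ((Fintype.equivFin V) u : ℕ) < i then gam G L α ((Fintype.equivFin V) u) else α u) := by
  set v := (Fintype.equivFin V).symm ⟨i, h⟩ with hv
  set S := (G.neighborFinset v).image
      (fun u => if h' : ((Fintype.equivFin V) u : ℕ) < i then gam G L α ((Fintype.equivFin V) u) else α u) with hS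
  have hne : (L v \ S).Nonempty := by
    by_contra hemp
    rw [not_nonempty_iff_eq_empty, sdiff_eq_empty_iff_subset] at hemp
    have h1 : (L v).card ≤ S.card := Finset.card_le_card hemp
    have h2 : S.card ≤ (G.neighborFinset v).card := Finset.card_image_le
    rw [SimpleGraph.card_neighborFinset_eq_degree] at h2
    exact absurd (hL v) (by omega)
  have hmem : gam G L α i ∈ L v \ S := by
    rw [gam, dif_pos h]
    exact pick_mem hne
  rw [Finset.mem_sdiff] at hmem
  refine ⟨hmem.1, fun u hu => ?_⟩
  intro heq
  apply hmem.2
  rw [hS, Finset.mem_image]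
  refine ⟨u, by rwa [SimpleGraph.mem_neighborFinset], ?_⟩
  rw [heq]
  exact dite_eq_ite

theorem stmt0 {V : Type} [Fintype V] [DecidableEq V] (G : SimpleGraph V)
    [DecidableRel G.Adj] (L : V → Finset ℕ) (α : V → ℕ)
    (hL : ∀ v, G.degree v < (L v).card)
    (hα : ∀ u v, G.Adj u v → α u ≠ α v) :
    OnceOnly G α L := by
  set e := Fintype.equivFin V with he
  refine ⟨fun v => gam G L α (e v), fun v => (e v : ℕ), ?_, ?_, ?_⟩
  · intro a b hab
    exact e.injective (Fin.val_injective hab)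
  · intro v
    have := (gam_spec G L α hL (e v) (e v).isLt).1
    simpa [he] using this
  · intro i u v hadj
    have hspec : ∀ w z, G.Adj w z →
        gam G L α (e w) ≠ (if ((e z : ℕ)) < (e w : ℕ) then gam G L α (e z) else α z) := by
      intro w z hwz
      have := (gam_spec G L α hL (e w) (e w).isLt).2 z (by simpa [he] using hwz)
      simpa using this
    have hne : (e u : ℕ) ≠ (e v : ℕ) := by
      intro hh
      exact hadj.ne (e.injective (Fin.val_injective hh))
    by_cases hu : (e u : ℕ) < i <;> by_cases hv : (e v : ℕ) < i <;>
      simp only [hu, hv, if_pos, if_neg, if_true, if_false]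
    · -- both recolored
      rcases lt_or_gt_of_ne hne with hlt | hlt
      · have := hspec v u hadj.symm
        rw [if_pos hlt] at this
        exact this.symm
      · have := hspec u v hadj
        rw [if_pos hlt] at this
        exact this
    · -- u recolored, v not
      have := hspec u v hadj
      rw [if_neg (by omega)] at this
      exact this
    · -- v recolored, u not
      have := hspec v u hadj.symm
      rw [if_neg (by omega)] at this
      exact this.symm
    · exact hα u v hadj
end

section
/- Let G be a graph consisting of a single edge v₁v₂, with a proper coloring α (using colors from {1,...,10}) and lists L(v₁), L(v₂) ⊆ {1,...,9} with |L(v₁)| ≥ 2 and |L(v₂)| ≥ 1. If there is no once-only recoloring from α to a proper L-coloring of G, then α(v₁) ≠ 10, α(v₂) ≠ 10, L(v₁) = {α(v₁), α(v₂)}, and L(v₂) = {α(v₁)}. -/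
/-- Helper: any choice of distinct target colors that avoids an immediate conflict
in one of the two recoloring orders yields a once-only recoloring of the edge. -/
lemma build (α : Fin 2 → ℕ) (L : Fin 2 → Finset ℕ) (hα : α 0 ≠ α 1)
    (c0 c1 : ℕ) (h0 : c0 ∈ L 0) (h1 : c1 ∈ L 1) (hne : c0 ≠ c1)
    (h : c0 ≠ α 1 ∨ c1 ≠ α 0) :
    OnceOnly (⊤ : SimpleGraph (Fin 2)) α L := by
  rcases h with h | h
  · refine ⟨![c0, c1], fun v => v.val, Fin.val_injective, ?_, ?_⟩
    · intro v; fin_cases v <;> simpa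
    · intro i u v huv
      have huv' : u ≠ v := huv.ne
      fin_cases u <;> fin_cases v <;> simp_all <;> split_ifs <;> omega
  · refine ⟨![c0, c1], fun v => 1 - v.val, ?_, ?_, ?_⟩
    · intro a b hab; fin_cases a <;> fin_cases b <;> simp_all
    · intro v; fin_cases v <;> simpa
    · intro i u v huv
      have huv' : u ≠ v := huv.ne
      fin_cases u <;> fin_cases v <;> simp_all <;> split_ifs <;> omega

/-- Lemma 11 (edge): if the edge v₁v₂ described by (2,1) admits no once-only
recoloring, then no vertex has color 10, L(v₁) = {α(v₁), α(v₂)} and L(v₂) = {α(v₁)}. -/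
theorem stmt1 (α : Fin 2 → ℕ) (L : Fin 2 → Finset ℕ)
    (hαrange : ∀ v, α v ∈ Finset.Icc 1 10)
    (hproper : α 0 ≠ α 1)
    (hLrange : ∀ v, L v ⊆ Finset.Icc 1 9)
    (hL0 : 2 ≤ (L 0).card) (hL1 : 1 ≤ (L 1).card)
    (hno : ¬ OnceOnly (⊤ : SimpleGraph (Fin 2)) α L) :
    α 0 ≠ 10 ∧ α 1 ≠ 10 ∧ L 0 = {α 0, α 1} ∧ L 1 = {α 0} := by
  have key : ∀ c0 ∈ L 0, ∀ c1 ∈ L 1, c0 ≠ c1 → c0 = α 1 ∧ c1 = α 0 := by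
    intro c0 h0 c1 h1 hne
    by_contra hc
    rw [not_and_or] at hc
    exact hno (build α L hproper c0 c1 h0 h1 hne (by tauto))
  have hL1' : L 1 = {α 0} := by
    apply Finset.eq_of_subset_of_card_le
    · intro c1 h1
      obtain ⟨c0, h0, hne⟩ :=
        Finset.exists_mem_ne (s := L 0) (by omega) c1
      simp [(key c0 h0 c1 h1 hne).2]
    · simpa using hL1
  have hα0 : α 0 ∈ L 1 := by rw [hL1']; simp
  have hL0' : L 0 = {α 0, α 1} := by
    apply Finset.eq_of_subset_of_card_le
    · intro c0 h0
      by_cases hc : c0 = α 0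
      · simp [hc]
      · simp [(key c0 h0 (α 0) hα0 hc).1]
    · rw [Finset.card_insert_of_notMem (by simpa using hproper),
        Finset.card_singleton]; omega
  have hα1 : α 1 ∈ L 0 := by rw [hL0']; simp
  refine ⟨?_, ?_, hL0', hL1'⟩
  · have := hLrange 1 hα0; simp at this; omega
  · have := hLrange 0 hα1; simp at this; omega
end

section
/- Let G be the path v₁v₂v₃ with a proper coloring α using colors {1,...,10}, and lists L(vᵢ) ⊆ {1,...,9} with |L(vᵢ)| ≥ 2 for all i. If at least one vertex has α-color 10, then there exists a once-only recoloring from α to a proper L-coloring of G. -/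
/-- Lemma 12 (path (2,2,2)): if some vertex of the path v₁v₂v₃ has color 10,
then there is a once-only recoloring. -/
theorem stmt2 (α : Fin 3 → ℕ) (L : Fin 3 → Finset ℕ)
    (hαrange : ∀ v, α v ∈ Finset.Icc 1 10)
    (hproper : ∀ u v, (SimpleGraph.pathGraph 3).Adj u v → α u ≠ α v)
    (hLrange : ∀ v, L v ⊆ Finset.Icc 1 9)
    (hLcard : ∀ v, 2 ≤ (L v).card)
    (h10 : ∃ v, α v = 10) :
    OnceOnly (SimpleGraph.pathGraph 3) α L := by
  have hadj : ∀ u v : Fin 3, (SimpleGraph.pathGraph 3).Adj u v ↔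
      (u = 0 ∧ v = 1) ∨ (u = 1 ∧ v = 0) ∨ (u = 1 ∧ v = 2) ∨ (u = 2 ∧ v = 1) := by
    intro u v
    rw [SimpleGraph.pathGraph_adj]
    fin_cases u <;> fin_cases v <;> simp <;> omega
  have h01 : α 0 ≠ α 1 := hproper 0 1 (by rw [hadj]; tauto)
  have h12 : α 1 ≠ α 2 := hproper 1 2 (by rw [hadj]; tauto)
  have ne10 : ∀ v : Fin 3, ∀ c ∈ L v, c ≠ 10 := by
    intro v c hc
    have := hLrange v hc
    simp only [Finset.mem_Icc] at this
    omega
  by_cases hA : α 1 = 10 ∨ α 1 ∈ L 1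
  · -- Case A: pick γ1 with the key property, recolor in order 0, 2, 1
    obtain ⟨γ1, hγ1L, hkey⟩ : ∃ γ1 ∈ L 1, ∀ c, c ≠ 10 → c ≠ γ1 → c ≠ α 1 := by
      rcases hA with h | h
      · have hpos : 0 < (L 1).card := by have := hLcard 1; omega
        obtain ⟨γ1, hγ1⟩ := Finset.card_pos.mp hpos
        exact ⟨γ1, hγ1, fun c hc _ => by rw [h]; exact hc⟩
      · exact ⟨α 1, h, fun c _ hc => hc⟩
    obtain ⟨γ0, hγ0L, hγ0⟩ :=
      Finset.exists_mem_ne (s := L 0) (by have := hLcard 0; omega) γ1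
    obtain ⟨γ2, hγ2L, hγ2⟩ :=
      Finset.exists_mem_ne (s := L 2) (by have := hLcard 2; omega) γ1
    have hγ0α1 : γ0 ≠ α 1 := hkey γ0 (ne10 0 γ0 hγ0L) hγ0
    have hγ2α1 : γ2 ≠ α 1 := hkey γ2 (ne10 2 γ2 hγ2L) hγ2
    refine ⟨![γ0, γ1, γ2], ![0, 2, 1], by decide, ?_, ?_⟩
    · intro v; fin_cases v <;> simpa
    · intro i u v h
      rw [hadj] at h
      rcases h with ⟨rfl, rfl⟩ | ⟨rfl, rfl⟩ | ⟨rfl, rfl⟩ | ⟨rfl, rfl⟩ <;>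
        split_ifs <;>
        simp only [Matrix.cons_val_zero, Matrix.cons_val_one, Matrix.head_cons,
          Matrix.cons_val_two, Matrix.tail_cons, Matrix.cons_val] at * <;> omega
  · push_neg at hA
    obtain ⟨hα1, hα1L⟩ := hA
    obtain ⟨w, hw⟩ := h10
    have hw' : α 0 = 10 ∨ α 2 = 10 := by
      fin_cases w
      · left; exact hw
      · exact absurd hw hα1
      · right; exact hw
    rcases hw' with h0 | h2
    · -- α 0 = 10 : recolor 1 first, then 0, then 2
      obtain ⟨γ1, hγ1L, hγ1⟩ :=
        Finset.exists_mem_ne (s := L 1) (by have := hLcard 1; omega) (α 2)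
      obtain ⟨γ0, hγ0L, hγ0⟩ :=
        Finset.exists_mem_ne (s := L 0) (by have := hLcard 0; omega) γ1
      obtain ⟨γ2, hγ2L, hγ2⟩ :=
        Finset.exists_mem_ne (s := L 2) (by have := hLcard 2; omega) γ1
      have hγ1α0 : γ1 ≠ α 0 := by rw [h0]; exact ne10 1 γ1 hγ1L
      refine ⟨![γ0, γ1, γ2], ![1, 0, 2], by decide, ?_, ?_⟩
      · intro v; fin_cases v <;> simpa
      · intro i u v h
        rw [hadj] at h
        rcases h with ⟨rfl, rfl⟩ | ⟨rfl, rfl⟩ | ⟨rfl, rfl⟩ | ⟨rfl, rfl⟩ <;>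
          split_ifs <;>
          simp only [Matrix.cons_val_zero, Matrix.cons_val_one, Matrix.head_cons,
            Matrix.cons_val_two, Matrix.tail_cons, Matrix.cons_val] at * <;> omega
    · -- α 2 = 10 : recolor 1 first, then 2, then 0
      obtain ⟨γ1, hγ1L, hγ1⟩ :=
        Finset.exists_mem_ne (s := L 1) (by have := hLcard 1; omega) (α 0)
      obtain ⟨γ0, hγ0L, hγ0⟩ :=
        Finset.exists_mem_ne (s := L 0) (by have := hLcard 0; omega) γ1
      obtain ⟨γ2, hγ2L, hγ2⟩ :=
        Finset.exists_mem_ne (s := L 2) (by have := hLcard 2; omega) γ1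
      have hγ1α2 : γ1 ≠ α 2 := by rw [h2]; exact ne10 1 γ1 hγ1L
      refine ⟨![γ0, γ1, γ2], ![2, 0, 1], by decide, ?_, ?_⟩
      · intro v; fin_cases v <;> simpa
      · intro i u v h
        rw [hadj] at h
        rcases h with ⟨rfl, rfl⟩ | ⟨rfl, rfl⟩ | ⟨rfl, rfl⟩ | ⟨rfl, rfl⟩ <;>
          split_ifs <;>
          simp only [Matrix.cons_val_zero, Matrix.cons_val_one, Matrix.head_cons,
            Matrix.cons_val_two, Matrix.tail_cons, Matrix.cons_val] at * <;> omega
end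

section
/- Let G be the path v₁v₂v₃ with a proper coloring α, and lists L(v₁), L(v₂), L(v₃) with |L(v₁)| ≥ 1, |L(v₂)| ≥ 4, |L(v₃)| ≥ 1, where α(vᵢ) may be arbitrary. Then there exists a once-only recoloring from α to a proper L-coloring of G. -/
lemma pick3 (s : Finset ℕ) (hs : 4 ≤ s.card) (a b c : ℕ) :
    ∃ x ∈ s, x ≠ a ∧ x ≠ b ∧ x ≠ c := by
  have h1 : ({a, b, c} : Finset ℕ).card ≤ 3 := by
    apply le_trans (Finset.card_insert_le _ _)
    have := Finset.card_insert_le b ({c} : Finset ℕ)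
    simp at this ⊢
    omega
  have h2 : 1 ≤ (s \ {a, b, c}).card := by
    have := Finset.le_card_sdiff ({a, b, c} : Finset ℕ) s
    omega
  obtain ⟨x, hx⟩ := Finset.card_pos.mp h2
  simp only [Finset.mem_sdiff, Finset.mem_insert, Finset.mem_singleton] at hx
  exact ⟨x, hx.1, by tauto, by tauto, by tauto⟩

/-- Lemma 13 (path (1,4,1)): the path v₁v₂v₃ with list sizes 1,4,1 always
admits a once-only recoloring. -/
theorem stmt3 (α : Fin 3 → ℕ) (L : Fin 3 → Finset ℕ)
    (hproper : ∀ u v, (SimpleGraph.pathGraph 3).Adj u v → α u ≠ α v)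
    (hL0 : 1 ≤ (L 0).card) (hL1 : 4 ≤ (L 1).card) (hL2 : 1 ≤ (L 2).card) :
    OnceOnly (SimpleGraph.pathGraph 3) α L := by
  obtain ⟨g0, hg0⟩ := Finset.card_pos.mp (by omega : 0 < (L 0).card)
  obtain ⟨g2, hg2⟩ := Finset.card_pos.mp (by omega : 0 < (L 2).card)
  have hα01 : α 0 ≠ α 1 := hproper 0 1 (by simp [SimpleGraph.pathGraph_adj])
  have hα12 : α 1 ≠ α 2 := hproper 1 2 (by simp [SimpleGraph.pathGraph_adj])
  by_cases h0 : g0 = α 1 <;> by_cases h2 : g2 = α 1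
  · -- both equal α 1: recolor 1 first, avoid α0 α2
    obtain ⟨g1, hg1, e1, e2, e3⟩ := pick3 (L 1) hL1 (α 0) (α 2) (α 1)
    refine ⟨![g0, g1, g2], ![1, 0, 2], by decide, ?_, ?_⟩
    · intro v; fin_cases v <;> simpa
    · intro i u v huv
      fin_cases u <;> fin_cases v <;>
        simp only [SimpleGraph.pathGraph_adj] at huv <;>
        simp_all [Matrix.cons_val_zero, Matrix.cons_val_one] <;>
        split_ifs <;> omega
  · -- g0 = α 1, g2 ≠ α 1 : order 2, 1, 0; γ1 avoids α0, g2, g0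
    obtain ⟨g1, hg1, e1, e2, e3⟩ := pick3 (L 1) hL1 (α 0) g2 g0
    refine ⟨![g0, g1, g2], ![2, 1, 0], by decide, ?_, ?_⟩
    · intro v; fin_cases v <;> simpa
    · intro i u v huv
      fin_cases u <;> fin_cases v <;>
        simp only [SimpleGraph.pathGraph_adj] at huv <;>
        simp_all [Matrix.cons_val_zero, Matrix.cons_val_one] <;>
        split_ifs <;> omega
  · -- g0 ≠ α 1, g2 = α 1 : order 0, 1, 2; γ1 avoids g0, α2, g2
    obtain ⟨g1, hg1, e1, e2, e3⟩ := pick3 (L 1) hL1 g0 (α 2) g2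
    refine ⟨![g0, g1, g2], ![0, 1, 2], by decide, ?_, ?_⟩
    · intro v; fin_cases v <;> simpa
    · intro i u v huv
      fin_cases u <;> fin_cases v <;>
        simp only [SimpleGraph.pathGraph_adj] at huv <;>
        simp_all [Matrix.cons_val_zero, Matrix.cons_val_one] <;>
        split_ifs <;> omega
  · -- neither equals α 1 : order 0, 2, 1; γ1 avoids g0, g2
    obtain ⟨g1, hg1, e1, e2, e3⟩ := pick3 (L 1) hL1 g0 g2 g2
    refine ⟨![g0, g1, g2], ![0, 2, 1], by decide, ?_, ?_⟩
    · intro v; fin_cases v <;> simpa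
    · intro i u v huv
      fin_cases u <;> fin_cases v <;>
        simp only [SimpleGraph.pathGraph_adj] at huv <;>
        simp_all [Matrix.cons_val_zero, Matrix.cons_val_one] <;>
        by_cases ha : 0 < i <;> by_cases hb : 1 < i <;> by_cases hc : 2 < i <;> simp [ha, hb, hc] <;> omega
end

section
/- Let G be a triangle with vertices v₁, v₂, v₃, a proper coloring α, and lists L(vᵢ) with |L(v₁)| ≥ 4, |L(v₂)| ≥ 3, |L(v₃)| ≥ 1. Then there exists a once-only recoloring from α to a proper L-coloring of G. -/
lemma pick_s4 (s : Finset ℕ) (a b c : ℕ) (h : 4 ≤ s.card) :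
    ∃ x ∈ s, x ≠ a ∧ x ≠ b ∧ x ≠ c := by
  have hle := Finset.le_card_sdiff ({a, b, c} : Finset ℕ) s
  have h3 : ({a, b, c} : Finset ℕ).card ≤ 3 :=
    (Finset.card_insert_le _ _).trans
      (Nat.succ_le_succ ((Finset.card_insert_le _ _).trans (by simp)))
  obtain ⟨x, hx⟩ := Finset.card_pos.1 (by omega : 0 < (s \ {a, b, c}).card)
  simp only [Finset.mem_sdiff, Finset.mem_insert, Finset.mem_singleton, not_or] at hx
  exact ⟨x, hx.1, hx.2.1, hx.2.2.1, hx.2.2.2⟩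

lemma pick2 (s : Finset ℕ) (a b : ℕ) (h : 3 ≤ s.card) :
    ∃ x ∈ s, x ≠ a ∧ x ≠ b := by
  have hle := Finset.le_card_sdiff ({a, b} : Finset ℕ) s
  have h2 : ({a, b} : Finset ℕ).card ≤ 2 :=
    (Finset.card_insert_le _ _).trans (by simp)
  obtain ⟨x, hx⟩ := Finset.card_pos.1 (by omega : 0 < (s \ {a, b}).card)
  simp only [Finset.mem_sdiff, Finset.mem_insert, Finset.mem_singleton, not_or] at hx
  exact ⟨x, hx.1, hx.2.1, hx.2.2⟩

lemma helper (α c : Fin 3 → ℕ) (L : Fin 3 → Finset ℕ) (p : Fin 3 → ℕ)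
    (hp : Function.Injective p)
    (hmem : ∀ v, c v ∈ L v)
    (hcc : ∀ u v, u ≠ v → c u ≠ c v)
    (hca : ∀ u v, p u < p v → c u ≠ α v)
    (hα : ∀ u v, u ≠ v → α u ≠ α v) :
    OnceOnly (⊤ : SimpleGraph (Fin 3)) α L := by
  refine ⟨c, p, hp, hmem, ?_⟩
  intro i u v huv
  simp only [SimpleGraph.top_adj] at huv
  by_cases hu : p u < i <;> by_cases hv : p v < i <;>
    simp only [hu, hv, if_true, if_false, if_pos, if_neg, not_false_iff]
  · exact hcc u v huv
  · exact hca u v (lt_of_lt_of_le hu (not_lt.1 hv))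
  · exact (hca v u (lt_of_lt_of_le hv (not_lt.1 hu))).symm
  · exact hα u v huv

lemma helper012 (α : Fin 3 → ℕ) (L : Fin 3 → Finset ℕ) (c0 c1 c2 : ℕ)
    (h0 : c0 ∈ L 0) (h1 : c1 ∈ L 1) (h2 : c2 ∈ L 2)
    (d01 : c0 ≠ c1) (d02 : c0 ≠ c2) (d12 : c1 ≠ c2)
    (a01 : c0 ≠ α 1) (a02 : c0 ≠ α 2) (a12 : c1 ≠ α 2)
    (hα : ∀ u v, u ≠ v → α u ≠ α v) :
    OnceOnly (⊤ : SimpleGraph (Fin 3)) α L := by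
  refine helper α ![c0, c1, c2] L ![0, 1, 2] (by decide) ?_ ?_ ?_ hα
  · intro v; fin_cases v <;> simpa
  · intro u v h; fin_cases u <;> fin_cases v <;> simp_all <;> omega
  · intro u v h; fin_cases u <;> fin_cases v <;> simp_all

lemma helper021 (α : Fin 3 → ℕ) (L : Fin 3 → Finset ℕ) (c0 c1 c2 : ℕ)
    (h0 : c0 ∈ L 0) (h1 : c1 ∈ L 1) (h2 : c2 ∈ L 2)
    (d01 : c0 ≠ c1) (d02 : c0 ≠ c2) (d12 : c1 ≠ c2)
    (a01 : c0 ≠ α 1) (a02 : c0 ≠ α 2) (a21 : c2 ≠ α 1)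
    (hα : ∀ u v, u ≠ v → α u ≠ α v) :
    OnceOnly (⊤ : SimpleGraph (Fin 3)) α L := by
  refine helper α ![c0, c1, c2] L ![0, 2, 1] (by decide) ?_ ?_ ?_ hα
  · intro v; fin_cases v <;> simpa
  · intro u v h; fin_cases u <;> fin_cases v <;> simp_all <;> omega
  · intro u v h; fin_cases u <;> fin_cases v <;> simp_all

/-- Lemma 15, first part: a triangle described by (4,3,1) is once-only recolorable. -/
theorem stmt4 (α : Fin 3 → ℕ) (L : Fin 3 → Finset ℕ)
    (hproper : ∀ u v, (⊤ : SimpleGraph (Fin 3)).Adj u v → α u ≠ α v)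
    (hL0 : 4 ≤ (L 0).card) (hL1 : 3 ≤ (L 1).card) (hL2 : 1 ≤ (L 2).card) :
    OnceOnly (⊤ : SimpleGraph (Fin 3)) α L := by
  have hα : ∀ u v : Fin 3, u ≠ v → α u ≠ α v := fun u v h => hproper u v (by simp [h])
  obtain ⟨c2, hc2⟩ := Finset.card_pos.1 (by omega : 0 < (L 2).card)
  by_cases hc2a1 : c2 = α 1
  · -- case 2
    obtain ⟨c1, hc1, h1c2, h1a2⟩ := pick2 (L 1) c2 (α 2) hL1
    obtain ⟨c0, hc0, h0c1, h0c2, h0a2⟩ := pick_s4 (L 0) c1 c2 (α 2) hL0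
    exact helper012 α L c0 c1 c2 hc0 hc1 hc2 h0c1 h0c2 h1c2
      (hc2a1 ▸ h0c2) h0a2 h1a2 hα
  · by_cases ha1L1 : α 1 ∈ L 1
    · -- case 1
      obtain ⟨c0, hc0, h0a1, h0c2, h0a2⟩ := pick_s4 (L 0) (α 1) c2 (α 2) hL0
      exact helper012 α L c0 (α 1) c2 hc0 ha1L1 hc2 h0a1 h0c2
        (fun h => hc2a1 h.symm) h0a1 h0a2 (hα 1 2 (by decide)) hα
    · by_cases hc2a2 : c2 = α 2
      · -- case 3a
        obtain ⟨c1, hc1, h1c2, h1a2⟩ := pick2 (L 1) c2 (α 2) hL1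
        obtain ⟨c0, hc0, h0c1, h0c2, h0a1⟩ := pick_s4 (L 0) c1 c2 (α 1) hL0
        exact helper012 α L c0 c1 c2 hc0 hc1 hc2 h0c1 h0c2 h1c2
          h0a1 (hc2a2 ▸ h0c2) h1a2 hα
      · by_cases ha2L1 : α 2 ∈ L 1
        · -- case 3b: order 0,2,1 with c1 = α 2
          obtain ⟨c0, hc0, h0a2, h0c2, h0a1⟩ := pick_s4 (L 0) (α 2) c2 (α 1) hL0
          exact helper021 α L c0 (α 2) c2 hc0 ha2L1 hc2 h0a2 h0c2
            (fun h => hc2a2 h.symm) h0a1 h0a2 hc2a1 hα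
        · -- case 3c
          obtain ⟨y, hy, hyc2, hya1, hya2⟩ := pick_s4 (L 0) c2 (α 1) (α 2) hL0
          obtain ⟨c1, hc1, h1c2, h1y⟩ := pick2 (L 1) c2 y hL1
          exact helper012 α L y c1 c2 hy hc1 hc2 (fun h => h1y h.symm) hyc2 h1c2
            hya1 hya2 (fun h => ha2L1 (h ▸ hc1)) hα
end

section
/- Let G be a triangle with vertices v₁, v₂, v₃, a proper coloring α using colors from {1,...,10}, and lists L(vᵢ) ⊆ {1,...,9} with |L(v₁)| ≥ 3, |L(v₂)| ≥ 3, |L(v₃)| ≥ 1. If there is no once-only recoloring from α to a proper L-coloring of G, then no vertex has α-color 10, L(v₁) = L(v₂) = {α(v₁), α(v₂), α(v₃)}, and L(v₃) ⊆ {α(v₁), α(v₂)}. -/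
lemma exists_ne_ne (S : Finset ℕ) (hS : 3 ≤ S.card) (x y : ℕ) :
    ∃ g ∈ S, g ≠ x ∧ g ≠ y := by
  by_contra h
  push_neg at h
  have hsub : S ⊆ {x, y} := by
    intro g hg
    by_cases hx : g = x
    · simp [hx]
    · simp [h g hg hx]
  have := Finset.card_le_card hsub
  have h2 : ({x, y} : Finset ℕ).card ≤ 2 := Finset.card_insert_le _ _ |>.trans (by simp)
  omega

lemma build_s5 (α : Fin 3 → ℕ) (L : Fin 3 → Finset ℕ) (γ : Fin 3 → ℕ) (ord : Fin 3 → ℕ)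
    (hinj : Function.Injective ord) (h3 : ∀ v, ord v < 3)
    (hmem : ∀ v, γ v ∈ L v)
    (hstep : ∀ i ≤ 3, ∀ u v : Fin 3, u ≠ v →
      (if ord u < i then γ u else α u) ≠ (if ord v < i then γ v else α v)) :
    OnceOnly (⊤ : SimpleGraph (Fin 3)) α L := by
  refine ⟨γ, ord, hinj, hmem, fun i u v h => ?_⟩
  rcases le_or_gt i 3 with hi | hi
  · exact hstep i hi u v h.ne
  · have h3' := hstep 3 le_rfl u v h.ne
    rw [if_pos ((h3 u).trans hi), if_pos ((h3 v).trans hi)]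
    rwa [if_pos (h3 u), if_pos (h3 v)] at h3'

/-- steps for order v0, v1, v2 -/
lemma step012 (a b c x y z : ℕ) (hab : a ≠ b) (hac : a ≠ c) (hbc : b ≠ c)
    (h1 : x ≠ b) (h2 : x ≠ c) (h3 : x ≠ y) (h4 : y ≠ c) (h5 : x ≠ z) (h6 : y ≠ z) :
    ∀ i ≤ 3, ∀ u v : Fin 3, u ≠ v →
      (if (![0,1,2] : Fin 3 → ℕ) u < i then (![x,y,z] : Fin 3 → ℕ) u else (![a,b,c] : Fin 3 → ℕ) u) ≠
      (if (![0,1,2] : Fin 3 → ℕ) v < i then (![x,y,z] : Fin 3 → ℕ) v else (![a,b,c] : Fin 3 → ℕ) v) := by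
  intro i hi u v huv
  interval_cases i <;> fin_cases u <;> fin_cases v <;>
    simp_all [Matrix.cons_val_zero, Matrix.cons_val_one, Matrix.head_cons] <;> omega

/-- steps for order v2, v0, v1 -/
lemma step120 (a b c x y z : ℕ) (hab : a ≠ b) (hac : a ≠ c) (hbc : b ≠ c)
    (h1 : z ≠ a) (h2 : z ≠ b) (h3 : x ≠ b) (h4 : x ≠ z) (h5 : x ≠ y) (h6 : y ≠ z) :
    ∀ i ≤ 3, ∀ u v : Fin 3, u ≠ v →
      (if (![1,2,0] : Fin 3 → ℕ) u < i then (![x,y,z] : Fin 3 → ℕ) u else (![a,b,c] : Fin 3 → ℕ) u) ≠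
      (if (![1,2,0] : Fin 3 → ℕ) v < i then (![x,y,z] : Fin 3 → ℕ) v else (![a,b,c] : Fin 3 → ℕ) v) := by
  intro i hi u v huv
  interval_cases i <;> fin_cases u <;> fin_cases v <;>
    simp_all [Matrix.cons_val_zero, Matrix.cons_val_one, Matrix.head_cons] <;> omega

/-- steps for order v0, v2, v1 -/
lemma step021 (a b c x y z : ℕ) (hab : a ≠ b) (hac : a ≠ c) (hbc : b ≠ c)
    (h1 : x ≠ b) (h2 : x ≠ c) (h3 : z ≠ x) (h4 : z ≠ b) (h5 : x ≠ y) (h6 : y ≠ z) :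
    ∀ i ≤ 3, ∀ u v : Fin 3, u ≠ v →
      (if (![0,2,1] : Fin 3 → ℕ) u < i then (![x,y,z] : Fin 3 → ℕ) u else (![a,b,c] : Fin 3 → ℕ) u) ≠
      (if (![0,2,1] : Fin 3 → ℕ) v < i then (![x,y,z] : Fin 3 → ℕ) v else (![a,b,c] : Fin 3 → ℕ) v) := by
  intro i hi u v huv
  interval_cases i <;> fin_cases u <;> fin_cases v <;>
    simp_all [Matrix.cons_val_zero, Matrix.cons_val_one, Matrix.head_cons] <;> omega

/-- steps for order v1, v2, v0 -/
lemma step201 (a b c x y z : ℕ) (hab : a ≠ b) (hac : a ≠ c) (hbc : b ≠ c)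
    (h1 : y ≠ a) (h2 : y ≠ c) (h3 : z ≠ a) (h4 : z ≠ y) (h5 : x ≠ y) (h6 : x ≠ z) :
    ∀ i ≤ 3, ∀ u v : Fin 3, u ≠ v →
      (if (![2,0,1] : Fin 3 → ℕ) u < i then (![x,y,z] : Fin 3 → ℕ) u else (![a,b,c] : Fin 3 → ℕ) u) ≠
      (if (![2,0,1] : Fin 3 → ℕ) v < i then (![x,y,z] : Fin 3 → ℕ) v else (![a,b,c] : Fin 3 → ℕ) v) := by
  intro i hi u v huv
  interval_cases i <;> fin_cases u <;> fin_cases v <;>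
    simp_all [Matrix.cons_val_zero, Matrix.cons_val_one, Matrix.head_cons] <;> omega

/-- steps for order v1, v0, v2 -/
lemma step102 (a b c x y z : ℕ) (hab : a ≠ b) (hac : a ≠ c) (hbc : b ≠ c)
    (h1 : y ≠ a) (h2 : y ≠ c) (h3 : x ≠ y) (h4 : x ≠ c) (h5 : x ≠ z) (h6 : y ≠ z) :
    ∀ i ≤ 3, ∀ u v : Fin 3, u ≠ v →
      (if (![1,0,2] : Fin 3 → ℕ) u < i then (![x,y,z] : Fin 3 → ℕ) u else (![a,b,c] : Fin 3 → ℕ) u) ≠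
      (if (![1,0,2] : Fin 3 → ℕ) v < i then (![x,y,z] : Fin 3 → ℕ) v else (![a,b,c] : Fin 3 → ℕ) v) := by
  intro i hi u v huv
  interval_cases i <;> fin_cases u <;> fin_cases v <;>
    simp_all [Matrix.cons_val_zero, Matrix.cons_val_one, Matrix.head_cons] <;> omega

lemma card3 (a b c : ℕ) : ({a, b, c} : Finset ℕ).card ≤ 3 := by
  refine (Finset.card_insert_le _ _).trans ?_
  have h := Finset.card_insert_le b ({c} : Finset ℕ)
  simp only [Finset.card_singleton] at h
  omega

lemma alpha_eta (α : Fin 3 → ℕ) : α = ![α 0, α 1, α 2] := by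
  funext v; fin_cases v <;> simp

/-- Lemma 15, second part: if a triangle described by (3,3,1) admits no once-only
recoloring, then no vertex has color 10, L(v₁) = L(v₂) = {α(v₁),α(v₂),α(v₃)} and
L(v₃) ⊆ {α(v₁),α(v₂)}. -/
theorem stmt5 (α : Fin 3 → ℕ) (L : Fin 3 → Finset ℕ)
    (hαrange : ∀ v, α v ∈ Finset.Icc 1 10)
    (hproper : ∀ u v, (⊤ : SimpleGraph (Fin 3)).Adj u v → α u ≠ α v)
    (hLrange : ∀ v, L v ⊆ Finset.Icc 1 9)
    (hL0 : 3 ≤ (L 0).card) (hL1 : 3 ≤ (L 1).card) (hL2 : 1 ≤ (L 2).card)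
    (hno : ¬ OnceOnly (⊤ : SimpleGraph (Fin 3)) α L) :
    (∀ v, α v ≠ 10) ∧
    L 0 = {α 0, α 1, α 2} ∧ L 1 = {α 0, α 1, α 2} ∧
    L 2 ⊆ {α 0, α 1} := by
  have hab : α 0 ≠ α 1 := hproper 0 1 (by simp)
  have hac : α 0 ≠ α 2 := hproper 0 2 (by simp)
  have hbc : α 1 ≠ α 2 := hproper 1 2 (by simp)
  have hαe := alpha_eta α
  have key2 : ∀ d ∈ L 2, d = α 0 ∨ d = α 1 := by
    intro d hd
    by_contra hcon
    push_neg at hcon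
    obtain ⟨hda, hdb⟩ := hcon
    by_cases hdc : d = α 2
    · subst hdc
      obtain ⟨g0, hg0, hg0b, hg0c⟩ := exists_ne_ne (L 0) hL0 (α 1) (α 2)
      obtain ⟨g1, hg1, hg10, hg1c⟩ := exists_ne_ne (L 1) hL1 g0 (α 2)
      exact hno (build_s5 α L ![g0, g1, α 2] ![0, 1, 2] (by decide) (by decide)
        (by intro v; fin_cases v <;> simpa)
        (hαe ▸ step012 (α 0) (α 1) (α 2) g0 g1 (α 2) hab hac hbc
          hg0b hg0c (Ne.symm hg10) hg1c hg0c hg1c))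
    · obtain ⟨g0, hg0, hg0b, hg0d⟩ := exists_ne_ne (L 0) hL0 (α 1) d
      obtain ⟨g1, hg1, hg10, hg1d⟩ := exists_ne_ne (L 1) hL1 g0 d
      exact hno (build_s5 α L ![g0, g1, d] ![1, 2, 0] (by decide) (by decide)
        (by intro v; fin_cases v <;> simpa)
        (hαe ▸ step120 (α 0) (α 1) (α 2) g0 g1 d hab hac hbc
          hda hdb hg0b hg0d (Ne.symm hg10) hg1d))
  obtain ⟨d, hd⟩ := Finset.card_pos.mp (by omega : 0 < (L 2).card)
  have hL0sub : L 0 ⊆ {α 0, α 1, α 2} := by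
    intro e he
    by_contra hcon
    simp only [Finset.mem_insert, Finset.mem_singleton, not_or] at hcon
    obtain ⟨hea, heb, hec⟩ := hcon
    rcases key2 d hd with hda | hdb
    · subst hda
      obtain ⟨g1, hg1, hg1e, hg1a⟩ := exists_ne_ne (L 1) hL1 e (α 0)
      exact hno (build_s5 α L ![e, g1, α 0] ![0, 2, 1] (by decide) (by decide)
        (by intro v; fin_cases v <;> simpa)
        (hαe ▸ step021 (α 0) (α 1) (α 2) e g1 (α 0) hab hac hbc
          heb hec (Ne.symm hea) hab (Ne.symm hg1e) hg1a))
    · subst hdb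
      by_cases hf : ∃ f ∈ L 1, f ≠ α 0 ∧ f ≠ α 1 ∧ f ≠ α 2
      · obtain ⟨f, hf1, hfa, hfb, hfc⟩ := hf
        obtain ⟨g0, hg0, hg0f, hg0b⟩ := exists_ne_ne (L 0) hL0 f (α 1)
        exact hno (build_s5 α L ![g0, f, α 1] ![2, 0, 1] (by decide) (by decide)
          (by intro v; fin_cases v <;> simpa)
          (hαe ▸ step201 (α 0) (α 1) (α 2) g0 f (α 1) hab hac hbc
            hfa hfc (Ne.symm hab) (Ne.symm hfb) hg0f hg0b))
      · push_neg at hf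
        have ha1 : α 0 ∈ L 1 := by
          have hsub : L 1 ⊆ {α 0, α 1, α 2} := by
            intro x hx
            simp only [Finset.mem_insert, Finset.mem_singleton]
            by_contra hc; push_neg at hc
            exact hc.2.2 (hf x hx hc.1 hc.2.1)
          have hcard : ({α 0, α 1, α 2} : Finset ℕ).card ≤ (L 1).card :=
            le_trans (card3 _ _ _) hL1
          have heq : L 1 = {α 0, α 1, α 2} := Finset.eq_of_subset_of_card_le hsub hcard
          rw [heq]; simp
        exact hno (build_s5 α L ![e, α 0, α 1] ![0, 1, 2] (by decide) (by decide)
          (by intro v; fin_cases v <;> simpa)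
          (hαe ▸ step012 (α 0) (α 1) (α 2) e (α 0) (α 1) hab hac hbc
            heb hec hea hac heb hab))
  have hcard3 : ({α 0, α 1, α 2} : Finset ℕ).card ≤ 3 := card3 _ _ _
  have hL0eq : L 0 = {α 0, α 1, α 2} :=
    Finset.eq_of_subset_of_card_le hL0sub (hcard3.trans hL0)
  have hbL0 : α 1 ∈ L 0 := by rw [hL0eq]; simp
  have hL1sub : L 1 ⊆ {α 0, α 1, α 2} := by
    intro e he
    by_contra hcon
    simp only [Finset.mem_insert, Finset.mem_singleton, not_or] at hcon
    obtain ⟨hea, heb, hec⟩ := hcon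
    rcases key2 d hd with hda | hdb
    · subst hda
      exact hno (build_s5 α L ![α 1, e, α 0] ![1, 0, 2] (by decide) (by decide)
        (by intro v; fin_cases v <;> simpa)
        (hαe ▸ step102 (α 0) (α 1) (α 2) (α 1) e (α 0) hab hac hbc
          hea hec (Ne.symm heb) hbc (Ne.symm hab) hea))
    · subst hdb
      obtain ⟨g0, hg0, hg0e, hg0b⟩ := exists_ne_ne (L 0) hL0 e (α 1)
      exact hno (build_s5 α L ![g0, e, α 1] ![2, 0, 1] (by decide) (by decide)
        (by intro v; fin_cases v <;> simpa)
        (hαe ▸ step201 (α 0) (α 1) (α 2) g0 e (α 1) hab hac hbc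
          hea hec (Ne.symm hab) (Ne.symm heb) hg0e hg0b))
  have hL1eq : L 1 = {α 0, α 1, α 2} :=
    Finset.eq_of_subset_of_card_le hL1sub (hcard3.trans hL1)
  refine ⟨?_, hL0eq, hL1eq, ?_⟩
  · intro v
    have hv : α v ∈ L 0 := by rw [hL0eq]; fin_cases v <;> simp
    have := hLrange 0 hv
    simp only [Finset.mem_Icc] at this
    omega
  · intro x hx
    rcases key2 x hx with h | h <;> simp [h]
end

section
/- Let M be a graph with a proper coloring α and list assignment L, and let v be a vertex of M such that |L(v)| > deg(v) + deg'(v), where deg'(v) is the number of neighbors u of v with α(u) ≠ 10. If the graph M − v with the restricted coloring and lists admits a once-only recoloring to a proper L-coloring, then so does M, provided 10 ∉ L(v). -/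
/-- Lemma 7: if |L(v)| > deg(v) + deg'(v) (deg' counting neighbors not colored 10),
10 ∉ L(v), and M − v is once-only recolorable, then so is M. -/
theorem stmt6 {V : Type} [Fintype V] [DecidableEq V] (M : SimpleGraph V)
    [DecidableRel M.Adj] (α : V → ℕ) (L : V → Finset ℕ) (v : V)
    (hproper : ∀ u w, M.Adj u w → α u ≠ α w)
    (hcard : M.degree v + ((M.neighborFinset v).filter fun u => α u ≠ 10).card
      < (L v).card)
    (h10 : 10 ∉ L v)
    (hsub : OnceOnly (M.induce {u : V | u ≠ v}) (fun u => α u.1) (fun u => L u.1)) :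
    OnceOnly M α L := by
  obtain ⟨γ, ord, hinj, hmem, hcond⟩ := hsub
  set S := M.neighborFinset v with hS
  -- forbidden colors
  set F : Finset ℕ :=
    (S.attach.image fun u => γ ⟨u.1, fun h => M.ne_of_adj
      ((M.mem_neighborFinset v u.1).mp u.2) h.symm⟩) ∪
    ((S.filter fun u => α u ≠ 10).image α) with hF
  have hFcard : F.card < (L v).card := by
    calc F.card ≤ _ + _ := Finset.card_union_le _ _
    _ ≤ S.attach.card + ((S.filter fun u => α u ≠ 10)).card := by
        gcongr <;> exact Finset.card_image_le
    _ = M.degree v + _ := by rw [Finset.card_attach]; rfl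
    _ < (L v).card := hcard
  have : (L v \ F).Nonempty := by
    apply Finset.card_pos.mp
    have := Finset.le_card_sdiff F (L v)
    omega
  obtain ⟨c, hc⟩ := this
  obtain ⟨hcL, hcF⟩ := Finset.mem_sdiff.mp hc
  have hc10 : c ≠ 10 := fun h => h10 (h ▸ hcL)
  -- c avoids α u and γ u for all neighbors u
  have hcα : ∀ u, M.Adj v u → c ≠ α u := by
    intro u hu
    by_cases h10' : α u = 10
    · rw [h10']; exact hc10
    · intro h
      apply hcF
      apply Finset.mem_union_right
      exact Finset.mem_image.mpr ⟨u, Finset.mem_filter.mpr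
        ⟨(M.mem_neighborFinset v u).mpr hu, h10'⟩, h.symm⟩
  have hcγ : ∀ (u : V) (hu : M.Adj v u), c ≠ γ ⟨u, fun h => M.ne_of_adj hu h.symm⟩ := by
    intro u hu h
    apply hcF
    apply Finset.mem_union_left
    exact Finset.mem_image.mpr ⟨⟨u, (M.mem_neighborFinset v u).mpr hu⟩,
      Finset.mem_attach _ _, h.symm⟩
  refine ⟨fun u => if h : u = v then c else γ ⟨u, h⟩,
    fun u => if h : u = v then 0 else ord ⟨u, h⟩ + 1, ?_, ?_, ?_⟩
  · intro a b hab
    by_cases ha : a = v <;> by_cases hb : b = v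
    · rw [ha, hb]
    · simp [ha, hb] at hab
    · simp [ha, hb] at hab
    · simp only [dif_neg ha, dif_neg hb, Nat.add_right_cancel_iff] at hab
      exact congrArg Subtype.val (hinj hab)
  · intro u
    by_cases h : u = v <;> simp [h]
    · exact hcL
    · exact hmem ⟨u, h⟩
  · intro i u w huw
    have hne := M.ne_of_adj huw
    rcases Nat.eq_zero_or_pos i with hi | hi
    · subst hi; simpa using hproper u w huw
    by_cases hu : u = v <;> by_cases hw : w = v
    · exact absurd (hu.trans hw.symm) hne
    · subst hu
      by_cases h : ord ⟨w, hw⟩ + 1 < i <;> simp [hw, hi, h]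
      · exact hcγ w huw
      · exact hcα w huw
    · subst hw
      by_cases h : ord ⟨u, hu⟩ + 1 < i <;> simp [hu, hi, h]
      · exact fun hh => hcγ u huw.symm hh.symm
      · exact fun hh => hcα u huw.symm hh.symm
    · have hadj : (M.induce {u : V | u ≠ v}).Adj ⟨u, hu⟩ ⟨w, hw⟩ := huw
      have := hcond (i - 1) ⟨u, hu⟩ ⟨w, hw⟩ hadj
      simp only [dif_neg hu, dif_neg hw]
      have h1 : (ord ⟨u, hu⟩ + 1 < i) ↔ (ord ⟨u, hu⟩ < i - 1) := by omega
      have h2 : (ord ⟨w, hw⟩ + 1 < i) ↔ (ord ⟨w, hw⟩ < i - 1) := by omega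
      simp only [h1, h2]
      exact this
end

section
/- Let M be a graph with a proper coloring α and list assignment L, and let v be a vertex with α(v) = 10 and |L(v)| > deg(v), where no list contains color 10. If M − v (with the restricted coloring and lists) admits a once-only recoloring, then M admits a once-only recoloring to a proper L-coloring. -/
/-- Lemma 8: if α(v) = 10, |L(v)| > deg(v), no list contains 10, and M − v is
once-only recolorable, then so is M. -/
theorem stmt7 {V : Type} [Fintype V] [DecidableEq V] (M : SimpleGraph V)
    [DecidableRel M.Adj] (α : V → ℕ) (L : V → Finset ℕ) (v : V)
    (hproper : ∀ u w, M.Adj u w → α u ≠ α w)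
    (hv : α v = 10)
    (hcard : M.degree v < (L v).card)
    (h10 : ∀ u, 10 ∉ L u)
    (hsub : OnceOnly (M.induce {u : V | u ≠ v}) (fun u => α u.1) (fun u => L u.1)) :
    OnceOnly M α L := by
  classical
  obtain ⟨γ₀, ord₀, hinj₀, hmem₀, hstep₀⟩ := hsub
  set γ' : V → ℕ := fun u => if h : u ≠ v then γ₀ ⟨u, h⟩ else 0 with hγ'
  set S : Finset ℕ := (M.neighborFinset v).image γ' with hS
  have hScard : S.card < (L v).card :=
    lt_of_le_of_lt (Finset.card_image_le.trans
      (le_of_eq (M.card_neighborFinset_eq_degree v))) hcard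
  obtain ⟨c, hcL, hcS⟩ := Finset.not_subset.mp
    (fun hsub' => absurd (Finset.card_le_card hsub') (not_le.mpr hScard))
  set N : ℕ := (Finset.univ.sup fun u : {u : V | u ≠ v} => ord₀ u) + 1 with hN
  have hlt : ∀ u : {u : V | u ≠ v}, ord₀ u < N := fun u =>
    Nat.lt_succ_of_le (Finset.le_sup (Finset.mem_univ u))
  refine ⟨fun u => if h : u ≠ v then γ₀ ⟨u, h⟩ else c,
          fun u => if h : u ≠ v then ord₀ ⟨u, h⟩ else N, ?_, ?_, ?_⟩
  · intro u w huw
    dsimp only at huw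
    by_cases hu : u ≠ v <;> by_cases hw : w ≠ v
    · rw [dif_pos hu, dif_pos hw] at huw
      exact congrArg Subtype.val (hinj₀ huw)
    · rw [dif_pos hu, dif_neg hw] at huw
      exact absurd huw (ne_of_lt (hlt ⟨u, hu⟩))
    · rw [dif_neg hu, dif_pos hw] at huw
      exact absurd huw.symm (ne_of_lt (hlt ⟨w, hw⟩))
    · rw [not_ne_iff.mp hu, not_ne_iff.mp hw]
  · intro u
    by_cases h : u ≠ v
    · simpa only [dif_pos h] using hmem₀ ⟨u, h⟩
    · rw [not_ne_iff.mp h]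
      dsimp only
      rw [dif_neg (not_not_intro rfl)]
      exact hcL
  · intro i u w hadj
    have hvv : ¬ (v ≠ v) := not_not_intro rfl
    by_cases hu : u ≠ v <;> by_cases hw : w ≠ v
    · simp only [dif_pos hu, dif_pos hw]
      exact hstep₀ i ⟨u, hu⟩ ⟨w, hw⟩ hadj
    · rw [not_ne_iff.mp hw] at hadj ⊢
      simp only [dif_pos hu, dif_neg hvv]
      by_cases hNi : N < i
      · rw [if_pos hNi, if_pos (lt_trans (hlt ⟨u, hu⟩) hNi)]
        intro heq
        apply hcS
        rw [hS]
        refine Finset.mem_image.mpr ⟨u, ?_, ?_⟩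
        · exact (M.mem_neighborFinset v u).mpr hadj.symm
        · rw [hγ', ← heq]; simp only [dif_pos hu]
      · rw [if_neg hNi]
        split_ifs with h1
        · intro heq
          exact h10 u (by rw [← hv, ← heq]; exact hmem₀ ⟨u, hu⟩)
        · exact hproper u v hadj
    · rw [not_ne_iff.mp hu] at hadj ⊢
      simp only [dif_pos hw, dif_neg hvv]
      by_cases hNi : N < i
      · rw [if_pos hNi, if_pos (lt_trans (hlt ⟨w, hw⟩) hNi)]
        intro heq
        apply hcS
        rw [hS]
        refine Finset.mem_image.mpr ⟨w, ?_, ?_⟩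
        · exact (M.mem_neighborFinset v w).mpr hadj
        · rw [hγ', heq]; simp only [dif_pos hw]
      · rw [if_neg hNi]
        split_ifs with h1
        · intro heq
          exact h10 w (by rw [← hv, heq]; exact hmem₀ ⟨w, hw⟩)
        · exact hproper v w hadj
    · rw [not_ne_iff.mp hu, not_ne_iff.mp hw] at hadj
      exact absurd hadj M.irrefl
end

section
/- Let M be a graph with proper coloring α and list assignment L, let v be a vertex, and let c ∈ L(v) be a color not equal to α(u) for any neighbor u of v. Define M' = M − v with lists L'(u) = L(u) \ {c} for u a neighbor of v and L'(u) = L(u) otherwise. If M' admits a once-only recoloring from the restriction of α to a proper L'-coloring, then M admits a once-only recoloring from α to a proper L-coloring. -/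
/-- Lemma 9: for c ∈ L(v) not appearing on neighbors of v, if M − (v → c)
(delete v, remove c from the lists of its neighbors) is once-only recolorable,
then so is M. -/
theorem stmt8 {V : Type} [Fintype V] [DecidableEq V] (M : SimpleGraph V)
    [DecidableRel M.Adj] (α : V → ℕ) (L : V → Finset ℕ) (v : V) (c : ℕ)
    (hproper : ∀ u w, M.Adj u w → α u ≠ α w)
    (hc : c ∈ L v)
    (hcnb : ∀ u, M.Adj v u → α u ≠ c)
    (hsub : OnceOnly (M.induce {u : V | u ≠ v}) (fun u => α u.1)
      (fun u => if M.Adj v u.1 then (L u.1).erase c else L u.1)) :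
    OnceOnly M α L := by
  obtain ⟨γ, ord, hinj, hmem, hstep⟩ := hsub
  -- neighbor targets avoid c
  have hγc : ∀ (u : {u : V | u ≠ v}), M.Adj v u.1 → γ u ≠ c := by
    intro u hadj
    have := hmem u
    simp only [hadj, if_true] at this
    exact Finset.ne_of_mem_erase this
  refine ⟨fun u => if h : u = v then c else γ ⟨u, h⟩,
    fun u => if h : u = v then 0 else ord ⟨u, h⟩ + 1, ?_, ?_, ?_⟩
  · intro a b hab
    by_cases ha : a = v <;> by_cases hb : b = v <;>
      simp only [ha, hb, dif_pos, dif_neg, not_false_iff] at hab ⊢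
    · omega
    · omega
    · have : (⟨a, ha⟩ : {u : V | u ≠ v}) = ⟨b, hb⟩ := hinj (by omega)
      exact congrArg Subtype.val this
  · intro u
    by_cases h : u = v
    · subst h; simpa using hc
    · simp only [dif_neg h]
      have := hmem ⟨u, h⟩
      by_cases hadj : M.Adj v u
      · simp only [hadj, if_true] at this
        exact Finset.mem_of_mem_erase this
      · simpa [hadj] using this
  · intro i u w hadj
    have huw : u ≠ w := hadj.ne
    by_cases hu : u = v <;> by_cases hw : w = v
    · exact absurd (hu.trans hw.symm) huw
    · -- u = v, w ≠ v
      subst hu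
      simp only [dif_pos, dif_neg hw]
      by_cases hi : 0 < i
      · simp only [if_pos hi]
        by_cases hwi : ord ⟨w, hw⟩ + 1 < i
        · simp only [if_pos hwi]
          exact fun h => hγc ⟨w, hw⟩ hadj h.symm
        · simp only [if_neg hwi]
          exact fun h => hcnb w hadj h.symm
      · have h2 : ¬(ord ⟨w, hw⟩ + 1 < i) := by omega
        simp only [if_neg hi, if_neg h2]
        exact hproper u w hadj
    · subst hw
      simp only [dif_pos, dif_neg hu]
      by_cases hi : 0 < i
      · simp only [if_pos hi]
        by_cases hui : ord ⟨u, hu⟩ + 1 < i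
        · simp only [if_pos hui]
          exact hγc ⟨u, hu⟩ hadj.symm
        · simp only [if_neg hui]
          exact hcnb u hadj.symm
      · have h2 : ¬(ord ⟨u, hu⟩ + 1 < i) := by omega
        simp only [if_neg hi, if_neg h2]
        exact hproper u w hadj
    · simp only [dif_neg hu, dif_neg hw]
      have hadj' : (M.induce {u : V | u ≠ v}).Adj ⟨u, hu⟩ ⟨w, hw⟩ := by
        simpa using hadj
      have := hstep (i - 1) ⟨u, hu⟩ ⟨w, hw⟩ hadj'
      have e1 : ord ⟨u, hu⟩ + 1 < i ↔ ord ⟨u, hu⟩ < i - 1 := by omega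
      have e2 : ord ⟨w, hw⟩ + 1 < i ↔ ord ⟨w, hw⟩ < i - 1 := by omega
      simp only [e1, e2]
      exact this
end

section
/- Let M be a graph with proper coloring α and list assignment L, let v be a vertex, and let c ∈ L(v). Define M' = M − v with lists L'(u) = L(u) \ {α(v), c} for u a neighbor of v and L'(u) = L(u) otherwise. If M' admits a once-only recoloring from the restriction of α to a proper L'-coloring, then M admits a once-only recoloring from α to a proper L-coloring (recolor the rest first, then v to c). -/
/-- Lemma 10: for c ∈ L(v), if M ⊖ (v → c) (delete v, remove α(v) and c from the
lists of its neighbors) is once-only recolorable, then so is M (recolor the rest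
first, then v to c). -/
theorem stmt9 {V : Type} [Fintype V] [DecidableEq V] (M : SimpleGraph V)
    [DecidableRel M.Adj] (α : V → ℕ) (L : V → Finset ℕ) (v : V) (c : ℕ)
    (hproper : ∀ u w, M.Adj u w → α u ≠ α w)
    (hc : c ∈ L v)
    (hsub : OnceOnly (M.induce {u : V | u ≠ v}) (fun u => α u.1)
      (fun u => if M.Adj v u.1 then (L u.1) \ {α v, c} else L u.1)) :
    OnceOnly M α L := by
  obtain ⟨γ', ord', hinj, hL, hstep⟩ := hsub
  set N : ℕ := (Finset.univ.sup fun u : {u : V | u ≠ v} => ord' u) + 1 with hN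
  have hlt : ∀ u : {u : V | u ≠ v}, ord' u < N := by
    intro u
    exact Nat.lt_succ_of_le (Finset.le_sup (Finset.mem_univ u))
  refine ⟨fun u => if h : u = v then c else γ' ⟨u, h⟩,
          fun u => if h : u = v then N else ord' ⟨u, h⟩, ?_, ?_, ?_⟩
  · intro a b hab
    by_cases ha : a = v <;> by_cases hb : b = v <;> simp [ha, hb] at hab ⊢
    · exact absurd hab.symm (Nat.ne_of_lt (hlt ⟨b, hb⟩))
    · exact absurd hab (Nat.ne_of_lt (hlt ⟨a, ha⟩))
    · exact Subtype.ext_iff.mp (hinj hab)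
  · intro u
    by_cases h : u = v
    · simpa [h] using hc
    · have := hL ⟨u, h⟩
      simp only at this
      split_ifs at this with h2
      · simp [h]; exact Finset.mem_sdiff.mp this |>.1
      · simpa [h] using this
  · intro i u w hadj
    have hne : u ≠ w := M.ne_of_adj hadj
    by_cases hu : u = v <;> by_cases hw : w = v
    · exact absurd (hu.trans hw.symm) hne
    · -- u = v
      subst hu
      have hmem : γ' ⟨w, hw⟩ ∈ L w \ {α u, c} := by
        have := hL ⟨w, hw⟩; simpa [hadj] using this
      have h1 : γ' ⟨w, hw⟩ ≠ α u := by
        have := (Finset.mem_sdiff.mp hmem).2; simp at this; exact this.1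
      have h2 : γ' ⟨w, hw⟩ ≠ c := by
        have := (Finset.mem_sdiff.mp hmem).2; simp at this; exact this.2
      simp only [dif_pos rfl, dif_neg hw, dite_true]
      by_cases hi : N < i
      · rw [if_pos hi, if_pos (lt_trans (hlt ⟨w, hw⟩) hi)]
        exact fun h => h2 h.symm
      · rw [if_neg hi]
        split_ifs
        · exact fun h => h1 h.symm
        · exact hproper _ _ hadj
    · -- w = v, symmetric
      subst hw
      have hadj' : M.Adj w u := hadj.symm
      have hmem : γ' ⟨u, hu⟩ ∈ L u \ {α w, c} := by
        have := hL ⟨u, hu⟩; simpa [hadj'] using this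
      have h1 : γ' ⟨u, hu⟩ ≠ α w := by
        have := (Finset.mem_sdiff.mp hmem).2; simp at this; exact this.1
      have h2 : γ' ⟨u, hu⟩ ≠ c := by
        have := (Finset.mem_sdiff.mp hmem).2; simp at this; exact this.2
      simp only [dif_pos rfl, dif_neg hu, dite_true]
      by_cases hi : N < i
      · rw [if_pos hi, if_pos (lt_trans (hlt ⟨u, hu⟩) hi)]
        exact h2
      · rw [if_neg hi]
        split_ifs
        · exact h1
        · exact hproper _ _ hadj
    · have hadj' : (M.induce {u : V | u ≠ v}).Adj ⟨u, hu⟩ ⟨w, hw⟩ := by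
        simpa using hadj
      have := hstep i ⟨u, hu⟩ ⟨w, hw⟩ hadj'
      simpa [dif_neg hu, dif_neg hw] using this
end

section
/- Let M be a graph with proper coloring α and list assignment L, and let v be a vertex such that |L(v)| > deg'(v) + |{u ∈ N(v) : |L(u)| = 1}|, where deg'(v) counts neighbors u of v with α(u) ≠ 10, and 10 ∉ L(v). If M admits no once-only recoloring from α to a proper L-coloring, then there exists a list assignment L' on M − v with L'(u) ⊆ L(u) for all u, |L'(u)| ≥ |L(u)| − 1 for neighbors u of v with |L(u)| ≥ 2, and |L'(u)| = |L(u)| for all other u, such that M − v with the restricted coloring and lists L' admits no once-only recoloring. -/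
/-- Lemma (xycons): if |L(v)| > deg'(v) + #{u ∈ N(v) : |L(u)| = 1}, 10 ∉ L(v),
and M is not once-only recolorable, then there is a list assignment L' on M − v,
losing at most one color and only on neighbors of v with list size ≥ 2, such
that M − v is not once-only recolorable either. -/
theorem stmt10 {V : Type} [Fintype V] [DecidableEq V] (M : SimpleGraph V)
    [DecidableRel M.Adj] (α : V → ℕ) (L : V → Finset ℕ) (v : V)
    (hproper : ∀ u w, M.Adj u w → α u ≠ α w)
    (h10 : 10 ∉ L v)
    (hcard : ((M.neighborFinset v).filter fun u => α u ≠ 10).card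
        + ((M.neighborFinset v).filter fun u => (L u).card = 1).card
      < (L v).card)
    (hno : ¬ OnceOnly M α L) :
    ∃ L' : {u : V | u ≠ v} → Finset ℕ,
      (∀ u, L' u ⊆ L u.1) ∧
      (∀ u, M.Adj v u.1 → 2 ≤ (L u.1).card → (L u.1).card - 1 ≤ (L' u).card) ∧
      (∀ u, ¬ (M.Adj v u.1 ∧ 2 ≤ (L u.1).card) → L' u = L u.1) ∧
      ¬ OnceOnly (M.induce {u : V | u ≠ v}) (fun u => α u.1) L' := by
  classical
  set B : Finset ℕ :=
    ((M.neighborFinset v).filter fun u => α u ≠ 10).image α ∪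
      ((M.neighborFinset v).filter fun u => (L u).card = 1).biUnion L with hBdef
  have hBcard : B.card < (L v).card := by
    calc B.card ≤ (((M.neighborFinset v).filter fun u => α u ≠ 10).image α).card
          + (((M.neighborFinset v).filter fun u => (L u).card = 1).biUnion L).card :=
          Finset.card_union_le _ _
      _ ≤ ((M.neighborFinset v).filter fun u => α u ≠ 10).card
          + ((M.neighborFinset v).filter fun u => (L u).card = 1).card := by
          gcongr
          · exact Finset.card_image_le
          · refine (Finset.card_biUnion_le).trans ?_
            refine le_of_eq ?_
            rw [Finset.sum_congr rfl fun u hu => (Finset.mem_filter.mp hu).2]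
            simp
      _ < (L v).card := hcard
  obtain ⟨c, hcL, hcB⟩ : ∃ c ∈ L v, c ∉ B := by
    by_contra h
    push_neg at h
    exact absurd (Finset.card_le_card h) (not_le.mpr hBcard)
  have hc10 : c ≠ 10 := fun h => h10 (h ▸ hcL)
  have hcα : ∀ u ∈ M.neighborFinset v, c ≠ α u := by
    intro u hu h
    by_cases h10u : α u = 10
    · exact hc10 (h.trans h10u)
    · exact hcB (Finset.mem_union_left _
        (Finset.mem_image.mpr ⟨u, Finset.mem_filter.mpr ⟨hu, h10u⟩, h.symm⟩))
  have hcL1 : ∀ u ∈ M.neighborFinset v, (L u).card = 1 → c ∉ L u := by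
    intro u hu h1 hc
    exact hcB (Finset.mem_union_right _
      (Finset.mem_biUnion.mpr ⟨u, Finset.mem_filter.mpr ⟨hu, h1⟩, hc⟩))
  set L' : {u : V | u ≠ v} → Finset ℕ :=
    fun u => if M.Adj v u.1 ∧ 2 ≤ (L u.1).card then (L u.1).erase c else L u.1
    with hL'def
  have hL'sub : ∀ u, L' u ⊆ L u.1 := by
    intro u
    rw [hL'def]
    dsimp only
    split
    · exact Finset.erase_subset _ _
    · exact Finset.Subset.refl _
  refine ⟨L', hL'sub, ?_, ?_, ?_⟩
  · intro u hadj h2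
    rw [hL'def]
    dsimp only
    rw [if_pos ⟨hadj, h2⟩]
    exact Finset.pred_card_le_card_erase
  · intro u h
    rw [hL'def]
    exact if_neg h
  · rintro ⟨γ', ord', hinj', hmem', hstep'⟩
    apply hno
    set γ : V → ℕ := fun u => if h : u = v then c else γ' ⟨u, h⟩ with hγdef
    set ord : V → ℕ := fun u => if h : u = v then 0 else ord' ⟨u, h⟩ + 1 with horddef
    have hγv : γ v = c := dif_pos rfl
    have hγu : ∀ (u : V) (h : u ≠ v), γ u = γ' ⟨u, h⟩ := fun u h => dif_neg h
    have hordv : ord v = 0 := dif_pos rfl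
    have hordu : ∀ (u : V) (h : u ≠ v), ord u = ord' ⟨u, h⟩ + 1 := fun u h => dif_neg h
    have hcgood : ∀ (w : V) (hw : w ≠ v), M.Adj v w → c ≠ γ' ⟨w, hw⟩ ∧ c ≠ α w := by
      intro w hw hvw
      have hwN : w ∈ M.neighborFinset v := (M.mem_neighborFinset v w).mpr hvw
      refine ⟨?_, hcα w hwN⟩
      intro h
      have hm := hmem' ⟨w, hw⟩
      rw [← h, hL'def] at hm
      dsimp only at hm
      by_cases h2 : 2 ≤ (L w).card
      · rw [if_pos ⟨hvw, h2⟩] at hm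
        exact (Finset.notMem_erase c _) hm
      · rw [if_neg (fun hh => h2 hh.2)] at hm
        interval_cases hLw : (L w).card
        · exact absurd hm (by simp [Finset.card_eq_zero.mp hLw])
        · exact hcL1 w hwN hLw hm
    refine ⟨γ, ord, ?_, ?_, ?_⟩
    · intro a b hab
      by_cases ha : a = v <;> by_cases hb : b = v
      · rw [ha, hb]
      · rw [ha, hordv, hordu b hb] at hab
        exact absurd hab.symm (Nat.succ_ne_zero _)
      · rw [hb, hordv, hordu a ha] at hab
        exact absurd hab (Nat.succ_ne_zero _)
      · rw [hordu a ha, hordu b hb] at hab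
        have := hinj' (Nat.succ_injective hab)
        exact congrArg Subtype.val this
    · intro u
      by_cases h : u = v
      · rw [h, hγv]; exact hcL
      · rw [hγu u h]
        exact hL'sub ⟨u, h⟩ (hmem' ⟨u, h⟩)
    · intro i u w hadj
      by_cases hu : u = v <;> by_cases hw : w = v
      · exact absurd (hu ▸ hw ▸ hadj) M.irrefl
      · rw [hu] at hadj ⊢
        rw [hγv, hordv, hγu w hw, hordu w hw]
        have hcg := hcgood w hw hadj
        by_cases hi : 0 < i
        · rw [if_pos hi]
          split
          · exact hcg.1
          · exact hcg.2
        · rw [if_neg hi, if_neg (by omega)]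
          exact hproper v w hadj
      · rw [hw] at hadj ⊢
        rw [hγv, hordv, hγu u hu, hordu u hu]
        have hcg := hcgood u hu (hadj.symm)
        by_cases hi : 0 < i
        · rw [if_pos hi]
          intro h
          split at h
          · exact hcg.1 h.symm
          · exact hcg.2 h.symm
        · rw [if_neg hi, if_neg (by omega)]
          exact hproper u v hadj
      · rw [hγu u hu, hγu w hw, hordu u hu, hordu w hw]
        rcases Nat.eq_zero_or_pos i with hi | hi
        · subst hi
          simp only [Nat.not_lt_zero, if_false]
          exact hproper u w hadj
        · obtain ⟨j, rfl⟩ := Nat.exists_eq_add_of_le hi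
          have h := hstep' j ⟨u, hu⟩ ⟨w, hw⟩ hadj
          simp only [show ∀ k : ℕ, (k + 1 < 1 + j) ↔ (k < j) from fun k => by omega]
          exact h
end

section
/- Let G be a planar graph on n vertices with a proper 10-coloring α, and suppose that from α one can reach some proper 9-coloring by a 'valid' recoloring sequence (recoloring every vertex at most twice, with at most 2n total recolorings). If additionally V(G) can be partitioned into an independent set I and a 3-degenerate graph D, and on graphs of degeneracy k any two c-colorings with c ≥ 2k+2 are at distance at most (k+1)|V| in the recoloring graph, then any two proper 10-colorings of G are connected in the reconfiguration graph R₁₀(G) by a path of length at most 8n. -/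
/-- A proper k-coloring with colors in {1,…,k}. -/
def ProperCol {V : Type} (G : SimpleGraph V) (k : ℕ) (α : V → ℕ) : Prop :=
  (∀ v, α v ∈ Finset.Icc 1 k) ∧ ∀ u v, G.Adj u v → α u ≠ α v

/-- A path of length at most m in the reconfiguration graph of proper
k-colorings: a sequence of proper k-colorings from α to β in which consecutive
colorings differ on at most one vertex. -/
def RecSeq {V : Type} [Fintype V] [DecidableEq V] (G : SimpleGraph V) (k : ℕ)
    (α β : V → ℕ) (m : ℕ) : Prop :=
  ∃ f : ℕ → V → ℕ, f 0 = α ∧ f m = β ∧ (∀ i ≤ m, ProperCol G k (f i)) ∧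
    ∀ i < m, (Finset.univ.filter fun v => f i v ≠ f (i + 1) v).card ≤ 1

/-- A graph is k-degenerate if every nonempty set of vertices contains a vertex
with at most k neighbors inside the set. -/
def Degenerate {W : Type} (H : SimpleGraph W) (k : ℕ) : Prop :=
  ∀ s : Set W, s.Nonempty → ∃ v ∈ s, ({u ∈ s | H.Adj v u}).ncard ≤ k

variable {V : Type} [Fintype V] [DecidableEq V] (G : SimpleGraph V) (k : ℕ)

lemma recseq_mono {α β : V → ℕ} {m m' : ℕ} (h : RecSeq G k α β m) (hm : m ≤ m') :
    RecSeq G k α β m' := by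
  obtain ⟨f, h0, hm', hp, hd⟩ := h
  refine ⟨fun i => f (min i m), by simp [h0], by simp [Nat.min_eq_right hm, hm'], ?_, ?_⟩
  · intro i _; exact hp _ (min_le_right _ _)
  · intro i _
    beta_reduce
    rcases lt_or_ge i m with h1 | h1
    · have h3 : min i m = i := min_eq_left h1.le
      have h2 : min (i+1) m = i+1 := min_eq_left h1
      rw [h3, h2]; exact hd i h1
    · have h3 : min i m = m := min_eq_right h1
      have h2 : min (i+1) m = m := min_eq_right (by omega)
      simp [h3, h2]

lemma recseq_symm {α β : V → ℕ} {m : ℕ} (h : RecSeq G k α β m) : RecSeq G k β α m := by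
  obtain ⟨f, h0, hm, hp, hd⟩ := h
  refine ⟨fun i => f (m - i), by simp [hm], by simp [h0], ?_, ?_⟩
  · intro i _; exact hp _ (Nat.sub_le _ _)
  · intro i hi
    beta_reduce
    have h1 : m - i = (m - (i+1)) + 1 := by omega
    rw [h1]
    have := hd (m - (i+1)) (by omega)
    calc (Finset.univ.filter fun v => f (m-(i+1)+1) v ≠ f (m-(i+1)) v).card
        = (Finset.univ.filter fun v => f (m-(i+1)) v ≠ f (m-(i+1)+1) v).card := by
          congr 1; ext v; simp [ne_comm]
      _ ≤ 1 := this

lemma recseq_trans {α β γ : V → ℕ} {m m' : ℕ} (h : RecSeq G k α β m)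
    (h' : RecSeq G k β γ m') : RecSeq G k α γ (m + m') := by
  obtain ⟨f, h0, hm, hp, hd⟩ := h
  obtain ⟨g, g0, gm, gp, gd⟩ := h'
  refine ⟨fun i => if i ≤ m then f i else g (i - m), by simp [h0], ?_, ?_, ?_⟩
  · beta_reduce
    rcases Nat.eq_zero_or_pos m' with h1 | h1
    · subst h1; rw [Nat.add_zero, if_pos le_rfl, hm, ← g0]; exact gm
    · rw [if_neg (by omega), Nat.add_sub_cancel_left, gm]
  · intro i hi
    beta_reduce
    by_cases h1 : i ≤ m
    · rw [if_pos h1]; exact hp i h1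
    · rw [if_neg h1]; exact gp _ (by omega)
  · intro i hi
    beta_reduce
    by_cases h1 : i + 1 ≤ m
    · rw [if_pos (show i ≤ m by omega), if_pos h1]; exact hd i (by omega)
    · by_cases h2 : i ≤ m
      · have : i = m := by omega
        subst this
        rw [if_pos le_rfl, if_neg h1, hm, Nat.add_sub_cancel_left, ← g0]
        exact gd 0 (by omega)
      · rw [if_neg h2, if_neg h1]
        have h3 : i + 1 - m = (i - m) + 1 := by omega
        rw [h3]; exact gd (i - m) (by omega)

lemma recseq_override (φ g : V → ℕ) (S : Finset V)
    (h : ∀ T ⊆ S, ProperCol G k (fun v => if v ∈ T then g v else φ v)) :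
    RecSeq G k φ (fun v => if v ∈ S then g v else φ v) S.card := by
  classical
  induction S using Finset.induction_on with
  | empty =>
    refine ⟨fun _ => φ, rfl, by simp, ?_, by simp⟩
    intro i hi
    simpa using h ∅ (by simp)
  | @insert a s ha ih =>
    have hstep : RecSeq G k (fun v => if v ∈ s then g v else φ v)
        (fun v => if v ∈ insert a s then g v else φ v) 1 := by
      refine ⟨fun i => if i = 0 then (fun v => if v ∈ s then g v else φ v)
        else (fun v => if v ∈ insert a s then g v else φ v), by simp, by simp, ?_, ?_⟩
      · intro i _
        by_cases hi : i = 0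
        · simpa [hi] using h s (Finset.subset_insert a s)
        · simpa [hi] using h (insert a s) le_rfl
      · intro i hi
        have : i = 0 := by omega
        subst this
        simp only [if_pos rfl, if_neg one_ne_zero]
        refine Finset.card_le_one.mpr ?_
        intro u hu v hv
        simp only [Finset.mem_filter] at hu hv
        by_contra hne
        rcases ne_or_eq u a with h1 | h1
        · exact hu.2 (by simp [Finset.mem_insert, h1])
        · rcases ne_or_eq v a with h2 | h2
          · exact hv.2 (by simp [Finset.mem_insert, h2])
          · exact hne (h1.trans h2.symm)
    have := recseq_trans G k (ih fun T hT => h T (hT.trans (Finset.subset_insert a s))) hstep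
    rwa [Finset.card_insert_of_notMem ha]

/-- Theorem 3 from Theorem 4: if from every proper 10-coloring of G one can reach
some proper 9-coloring by a valid sequence (each vertex recolored at most twice,
at most 2n recolorings in total), if V(G) partitions into an independent set and
a 3-degenerate part, and if (Bousquet–Perarnau) on k-degenerate graphs any two
c-colorings with c ≥ 2k+2 are at distance at most (k+1)|V| in the recoloring
graph, then any two proper 10-colorings of G are at distance at most 8n in
R₁₀(G). -/
theorem stmt13 {V : Type} [Fintype V] [DecidableEq V] (G : SimpleGraph V)
    (n : ℕ) (hn : n = Fintype.card V)
    (hvalid : ∀ φ : V → ℕ, ProperCol G 10 φ → ∃ ψ : V → ℕ, ProperCol G 9 ψ ∧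
      ∃ f : ℕ → V → ℕ, f 0 = φ ∧ f (2 * n) = ψ ∧
        (∀ i ≤ 2 * n, ProperCol G 10 (f i)) ∧
        (∀ i < 2 * n, (Finset.univ.filter fun v => f i v ≠ f (i + 1) v).card ≤ 1) ∧
        (∀ v : V, ((Finset.range (2 * n)).filter fun i => f i v ≠ f (i + 1) v).card ≤ 2))
    (hpart : ∃ I : Set V, (∀ u ∈ I, ∀ w ∈ I, ¬ G.Adj u w) ∧
      Degenerate (G.induce Iᶜ) 3)
    (hBP : ∀ (W : Type) [Fintype W] [DecidableEq W] (H : SimpleGraph W) (k c : ℕ),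
      Degenerate H k → 2 * k + 2 ≤ c → ∀ φ ψ : W → ℕ,
        ProperCol H c φ → ProperCol H c ψ → RecSeq H c φ ψ ((k + 1) * Fintype.card W))
    (α β : V → ℕ) (hα : ProperCol G 10 α) (hβ : ProperCol G 10 β) :
    RecSeq G 10 α β (8 * n) := by
  classical
  obtain ⟨I, hI, hdeg⟩ := hpart
  obtain ⟨ψ₁, hψ₁, f₁, hf₁0, hf₁m, hf₁p, hf₁d, -⟩ := hvalid α hα
  obtain ⟨ψ₂, hψ₂, f₂, hf₂0, hf₂m, hf₂p, hf₂d, -⟩ := hvalid β hβ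
  have s1 : RecSeq G 10 α ψ₁ (2 * n) := ⟨f₁, hf₁0, hf₁m, hf₁p, hf₁d⟩
  have s5 : RecSeq G 10 ψ₂ β (2 * n) := recseq_symm G 10 ⟨f₂, hf₂0, hf₂m, hf₂p, hf₂d⟩
  set S : Finset V := I.toFinset with hS
  have memS : ∀ v : V, v ∈ S ↔ v ∈ I := by intro v; simp [hS]
  -- overriding the independent set with color 10 keeps properness
  have key : ∀ ψ : V → ℕ, ProperCol G 9 ψ → ∀ T ⊆ S,
      ProperCol G 10 (fun v => if v ∈ T then (fun _ : V => 10) v else ψ v) := by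
    intro ψ hψ T hT
    constructor
    · intro v
      by_cases h : v ∈ T
      · simp [h]
      · simp only [h, if_neg, if_false]
        have := hψ.1 v
        simp only [Finset.mem_Icc] at this ⊢
        omega
    · intro u v huv
      by_cases hu : u ∈ T <;> by_cases hv : v ∈ T <;> simp only [hu, hv, if_pos, if_neg, if_true, if_false]
      · exact absurd huv (hI u ((memS u).mp (hT hu)) v ((memS v).mp (hT hv)))
      · have := hψ.1 v; simp only [Finset.mem_Icc] at this; omega
      · have := hψ.1 u; simp only [Finset.mem_Icc] at this; omega
      · exact hψ.2 u v huv
  have s2 : RecSeq G 10 ψ₁ (fun v => if v ∈ S then 10 else ψ₁ v) S.card :=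
    recseq_override G 10 ψ₁ (fun _ => 10) S (key ψ₁ hψ₁)
  have s4 : RecSeq G 10 (fun v => if v ∈ S then 10 else ψ₂ v) ψ₂ S.card :=
    recseq_symm G 10 (recseq_override G 10 ψ₂ (fun _ => 10) S (key ψ₂ hψ₂))
  -- the middle part on the induced subgraph
  set W := ↥(Iᶜ) with hW
  have hprop : ∀ ψ : V → ℕ, ProperCol G 9 ψ → ProperCol (G.induce Iᶜ) 9 (fun w : W => ψ w.1) := by
    intro ψ hψ
    exact ⟨fun w => hψ.1 w.1, fun u w h => hψ.2 u.1 w.1 h⟩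
  obtain ⟨g, hg0, hgm, hgp, hgd⟩ :=
    hBP W (G.induce Iᶜ) 3 9 hdeg (by norm_num) _ _ (hprop ψ₁ hψ₁) (hprop ψ₂ hψ₂)
  set M := (3 + 1) * Fintype.card W with hM
  -- lift the sequence to V
  have s3 : RecSeq G 10 (fun v => if v ∈ S then 10 else ψ₁ v)
      (fun v => if v ∈ S then 10 else ψ₂ v) M := by
    refine ⟨fun i v => if h : v ∈ Iᶜ then g i ⟨v, h⟩ else 10, ?_, ?_, ?_, ?_⟩
    · funext v
      beta_reduce
      by_cases h : v ∈ Iᶜ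
      · rw [dif_pos h, hg0, if_neg (by rw [memS]; exact h)]
      · rw [dif_neg h, if_pos (by rw [memS]; simpa using h)]
    · funext v
      beta_reduce
      by_cases h : v ∈ Iᶜ
      · rw [dif_pos h, hgm, if_neg (by rw [memS]; exact h)]
      · rw [dif_neg h, if_pos (by rw [memS]; simpa using h)]
    · intro i hi
      constructor
      · intro v
        beta_reduce
        by_cases h : v ∈ Iᶜ
        · rw [dif_pos h]
          have := (hgp i hi).1 ⟨v, h⟩
          simp only [Finset.mem_Icc] at this ⊢
          omega
        · rw [dif_neg h]; simp
      · intro u v huv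
        beta_reduce
        by_cases hu : u ∈ Iᶜ <;> by_cases hv : v ∈ Iᶜ
        · rw [dif_pos hu, dif_pos hv]
          exact (hgp i hi).2 ⟨u, hu⟩ ⟨v, hv⟩ huv
        · rw [dif_pos hu, dif_neg hv]
          have := (hgp i hi).1 ⟨u, hu⟩
          simp only [Finset.mem_Icc] at this; omega
        · rw [dif_neg hu, dif_pos hv]
          have := (hgp i hi).1 ⟨v, hv⟩
          simp only [Finset.mem_Icc] at this; omega
        · exact absurd huv (hI u (by simpa using hu) v (by simpa using hv))
    · intro i hi
      by_contra hcon
      rw [not_le] at hcon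
      obtain ⟨a, ha, b, hb, hab⟩ := Finset.one_lt_card.mp hcon
      simp only [Finset.mem_filter] at ha hb
      have haI : a ∈ Iᶜ := by
        by_contra h; exact ha.2 (by rw [dif_neg h, dif_neg h])
      have hbI : b ∈ Iᶜ := by
        by_contra h; exact hb.2 (by rw [dif_neg h, dif_neg h])
      have ha' : g i ⟨a, haI⟩ ≠ g (i+1) ⟨a, haI⟩ := by
        have := ha.2; rwa [dif_pos haI, dif_pos haI] at this
      have hb' : g i ⟨b, hbI⟩ ≠ g (i+1) ⟨b, hbI⟩ := by
        have := hb.2; rwa [dif_pos hbI, dif_pos hbI] at this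
      have := hgd i hi
      have h3 : 1 < (Finset.univ.filter fun w : W => g i w ≠ g (i+1) w).card :=
        Finset.one_lt_card.mpr ⟨⟨a, haI⟩, by simpa using ha', ⟨b, hbI⟩,
          by simpa using hb', fun h => hab (congrArg Subtype.val h)⟩
      omega
  -- combine
  have total := recseq_trans G 10 (recseq_trans G 10 (recseq_trans G 10
    (recseq_trans G 10 s1 s2) s3) s4) s5
  refine recseq_mono G 10 total ?_
  have hcardS : S.card = Fintype.card ↥I := Set.toFinset_card I
  have hcardW : Fintype.card W = Fintype.card V - Fintype.card ↥I :=
    Fintype.card_compl_set I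
  have hle : Fintype.card ↥I ≤ Fintype.card V := Fintype.card_subtype_le _
  rw [hM, hcardS, hcardW, ← hn]
  omega
end
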